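/- Let φ^z : R^n → R^n be the time-1 map of the ODE y'(u) = F(y(u))z, where F : R^n → R^{n×m} has bounded entries with bounded Lipschitz-continuous derivatives. Then there is a constant C > 0, independent of x and z, such that ‖φ^z(x) - x - F(x)z‖ ≤ C‖z‖² for all x ∈ R^n, z ∈ R^m. -/

import Mathlib

/-!
The flow `y` of `y' = V(y)` with `‖V‖ ≤ M` moves at speed at most `M`, so `‖y u - y 0‖ ≤ M |u|`.
If moreover `V` is `K`-Lipschitz, then `u ↦ y u - u • V (y 0)` has derivative
`V (y u) - V (y 0)` of norm at most `K M |u|`, and the mean value inequality gives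
`‖y t - y 0 - t • V (y 0)‖ ≤ K M t²`. For `V = F(·) z` one has `M = ‖F‖_∞ ‖z‖` and `K = Lip(F) ‖z‖`.
-/

open Set

section Flow

variable {E : Type*} [NormedAddCommGroup E] [NormedSpace ℝ E]
  {V : E → E} {y : ℝ → E} {M : ℝ}

theorem norm_flow_sub_le_of_norm_le (hV : ∀ x, ‖V x‖ ≤ M)
    (hy : ∀ u, HasDerivAt y (V (y u)) u) (t : ℝ) :
    ‖y t - y 0‖ ≤ M * |t| := by
  simpa using convex_univ.norm_image_sub_le_of_norm_hasDerivWithin_le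
    (fun u _ => (hy u).hasDerivWithinAt) (fun u _ => hV (y u)) (mem_univ 0) (mem_univ t)

theorem norm_flow_sub_linear_le {K : NNReal} (hVLip : LipschitzWith K V)
    (hV : ∀ x, ‖V x‖ ≤ M) (hy : ∀ u, HasDerivAt y (V (y u)) u) (t : ℝ) :
    ‖y t - y 0 - t • V (y 0)‖ ≤ K * M * t ^ 2 := by
  have hderiv : ∀ u, HasDerivAt (fun u => y u - u • V (y 0)) (V (y u) - V (y 0)) u :=
    fun u => by simpa using (hy u).fun_sub ((hasDerivAt_id u).smul_const (V (y 0)))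
  have hbound : ∀ u ∈ uIcc 0 t, ‖V (y u) - V (y 0)‖ ≤ K * M * |t| := fun u hu =>
    calc ‖V (y u) - V (y 0)‖ ≤ K * ‖y u - y 0‖ := hVLip.norm_sub_le _ _
      _ ≤ K * (M * |u|) := by gcongr; exact norm_flow_sub_le_of_norm_le hV hy u
      _ ≤ K * (M * |t|) := by
        have hM : 0 ≤ M := (norm_nonneg _).trans (hV 0)
        have hut : |u| ≤ |t| := by simpa using abs_sub_left_of_mem_uIcc hu
        gcongr
      _ = K * M * |t| := by ring
  have hMVT := (convex_uIcc 0 t).norm_image_sub_le_of_norm_hasDerivWithin_le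
    (fun u _ => (hderiv u).hasDerivWithinAt) hbound left_mem_uIcc right_mem_uIcc
  calc ‖y t - y 0 - t • V (y 0)‖ ≤ K * M * |t| * ‖t - 0‖ := by
        simpa only [zero_smul, sub_zero, sub_right_comm] using hMVT
    _ = K * M * t ^ 2 := by rw [sub_zero, Real.norm_eq_abs, mul_assoc, ← sq, sq_abs]

end Flow

theorem marcus_map_taylor_general
    (n m : ℕ)
    (F : EuclideanSpace ℝ (Fin n) → (EuclideanSpace ℝ (Fin m) →L[ℝ] EuclideanSpace ℝ (Fin n)))
    (KF : ℝ) (hFbdd : ∀ x, ‖F x‖ ≤ KF)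
    (KL : ℝ) (hFLip : LipschitzWith (Real.toNNReal KL) F)
    (φ : EuclideanSpace ℝ (Fin m) → EuclideanSpace ℝ (Fin n) → EuclideanSpace ℝ (Fin n))
    (hφ : ∀ z x, ∃ y : ℝ → EuclideanSpace ℝ (Fin n),
      y 0 = x ∧ (∀ u : ℝ, HasDerivAt y (F (y u) z) u) ∧ φ z x = y 1) :
    ∃ C > (0:ℝ), ∀ (x : EuclideanSpace ℝ (Fin n)) (z : EuclideanSpace ℝ (Fin m)),
      ‖φ z x - x - F x z‖ ≤ C * ‖z‖ ^ 2 := by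
  have hKF : 0 ≤ KF := (norm_nonneg _).trans (hFbdd 0)
  refine ⟨KL.toNNReal * KF + 1, by positivity, fun x z => ?_⟩
  obtain ⟨y, rfl, hy, hφy⟩ := hφ z x
  rw [hφy]
  have hVLip := (ContinuousLinearMap.lipschitz_apply z).comp hFLip
  have hV : ∀ x, ‖F x z‖ ≤ KF * ‖z‖ := fun x => (F x).le_of_opNorm_le (hFbdd x) z
  have hTaylor := norm_flow_sub_linear_le hVLip hV hy 1
  calc ‖y 1 - y 0 - F (y 0) z‖ ≤ ‖z‖ * KL.toNNReal * (KF * ‖z‖) := by simpa using hTaylor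
    _ ≤ (KL.toNNReal * KF + 1) * ‖z‖ ^ 2 := by nlinarith [sq_nonneg ‖z‖]

/-- Second-order Taylor estimate for the Marcus jump map: if `φ^z` is the time-1 flow of
`y' = F(y)z` with `F` bounded with bounded Lipschitz derivatives, then
`‖φ^z(x) - x - F(x)z‖ ≤ C‖z‖²` for a constant `C` independent of `x` and `z`. -/
theorem marcus_map_taylor
    (n m : ℕ)
    (F : EuclideanSpace ℝ (Fin n) → (EuclideanSpace ℝ (Fin m) →L[ℝ] EuclideanSpace ℝ (Fin n)))
    (KF : ℝ) (hFbdd : ∀ x, ‖F x‖ ≤ KF)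
    (KL : ℝ) (hFLip : LipschitzWith (Real.toNNReal KL) F)
    (hFdiff : ∀ z : EuclideanSpace ℝ (Fin m),
      Differentiable ℝ (fun x => F x z))
    (KD : ℝ) (hFderiv_bdd : ∀ (z : EuclideanSpace ℝ (Fin m)) (x),
      ‖fderiv ℝ (fun y => F y z) x‖ ≤ KD * ‖z‖)
    (hFderiv_lip : ∀ z : EuclideanSpace ℝ (Fin m),
      LipschitzWith (Real.toNNReal (KD * ‖z‖)) (fun x => fderiv ℝ (fun y => F y z) x))
    (φ : EuclideanSpace ℝ (Fin m) → EuclideanSpace ℝ (Fin n) → EuclideanSpace ℝ (Fin n))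
    (hφ : ∀ z x, ∃ y : ℝ → EuclideanSpace ℝ (Fin n),
      y 0 = x ∧ (∀ u : ℝ, HasDerivAt y (F (y u) z) u) ∧ φ z x = y 1) :
    ∃ C > (0:ℝ), ∀ (x : EuclideanSpace ℝ (Fin n)) (z : EuclideanSpace ℝ (Fin m)),
      ‖φ z x - x - F x z‖ ≤ C * ‖z‖ ^ 2 :=
  marcus_map_taylor_general n m F KF hFbdd KL hFLip φ hφ
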